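/- There exists a constant k_0 > 0 such that the following holds for all integers k ≥ k_0, all reals ε > 0 and λ with 4 < λ ≤ k satisfying ε ≤ k^{-3}, and all n, m with m/n ≤ 2^k·ln 2 such that εn and ε(k−λ)n are positive integers. For the random formula Φ = Φ_k(n,m), the probability that there exist sets Z ⊆ [m] with |Z| = εn, Y ⊆ V with |Y| = ε(k−λ)n, and I ⊆ [m]∖Z with |I| = εn such that N(Φ_i) ⊆ N(Φ_Z) ∪ Y for all i ∈ I, is at most ((2e)^{2k}·ε^{λ/2})^{εn}. -/

import Mathlib

/-!
Union bound over the triples `(Z, Y, I)`. Once the clauses indexed by `Z` are fixed, every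
literal of a clause in `I` must be one of the at most `2 (k a + b)` literals over
`N(Φ_Z) ∪ Y`, and the clauses in `I` are independent of those in `Z`; so a single triple has
probability at most `((k a + b) / n) ^ (k a)`. With `C(n, r) ≤ (e n / r) ^ r`, the union bound
becomes the `a`-th power of a quantity depending only on `k`, `ε`, `λ`, and comparing logarithms
of that quantity with `(2e)^{2k} ε^{λ/2}` needs only `μ log (μ / k) ≥ μ - k` for `μ = k - λ`,
`log ε ≤ -3 log k`, and `2 + 4 log k ≤ (1 - log 2) k`, which holds for large `k`.
-/

open Finset
open scoped Classical

/-- A `k`-SAT formula with `m` clauses over variables `Fin n`: each clause is an ordered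
`k`-tuple of literals, a literal being a pair of a variable and a sign
(`true` = positive occurrence, `false` = negated occurrence). -/
abbrev KFormula (n m k : ℕ) := Fin m → Fin k → Fin n × Bool

/-- The probability, under the uniform distribution on `k`-SAT formulas with `m` clauses
over `n` variables, of the event `P`. -/
noncomputable def probOf (n m k : ℕ) (P : KFormula n m k → Prop) : ℝ :=
  ((Finset.univ.filter fun Φ : KFormula n m k => P Φ).card : ℝ) /
    (Fintype.card (KFormula n m k) : ℝ)

/-- The set `N(Φ_i)` of variables occurring in clause `i`. -/
def clauseVars {n m k : ℕ} (Φ : KFormula n m k) (i : Fin m) : Finset (Fin n) :=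
  Finset.image (fun j => (Φ i j).1) Finset.univ

/-- The set `N(Φ_Z)` of variables occurring in the subformula with clause indices `Z`. -/
def varsOf {n m k : ℕ} (Φ : KFormula n m k) (Z : Finset (Fin m)) : Finset (Fin n) :=
  Z.biUnion (clauseVars Φ)

section Counting

variable {ι α : Type*} [Fintype ι] [DecidableEq ι] [Fintype α] [DecidableEq α]

theorem card_filter_forall_mem_le (I : Finset ι) (S : (ι → α) → Finset α) {s : ℕ}
    (hS : ∀ Φ Ψ : ι → α, (∀ i ∉ I, Φ i = Ψ i) → S Φ = S Ψ) (hs : ∀ Φ, #(S Φ) ≤ s) :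
    #{Φ : ι → α | ∀ i ∈ I, Φ i ∈ S Φ} ≤ s ^ #I * Fintype.card α ^ (Fintype.card ι - #I) := by
  set F : Finset (ι → α) := {Φ | ∀ i ∈ I, Φ i ∈ S Φ}
  refine (card_le_mul_card_image_of_maps_to (f := fun Φ (i : ↥Iᶜ) => Φ i) (t := univ)
    (fun _ _ => mem_univ _) (s ^ #I) fun g _ => ?_).trans (by simp)
  rcases eq_empty_or_nonempty {Φ ∈ F | (fun i : ↥Iᶜ => Φ i) = g} with h | ⟨Φ₀, hΦ₀⟩
  · simp [h]
  calc _ ≤ #(Fintype.piFinset fun i => if i ∈ I then S Φ₀ else {Φ₀ i}) := by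
        refine card_le_card fun Φ hΦ => ?_
        simp only [F, mem_filter, mem_univ, true_and] at hΦ hΦ₀
        have hagree : ∀ i ∉ I, Φ i = Φ₀ i := fun i hi =>
          congrFun (hΦ.2.trans hΦ₀.2.symm) ⟨i, mem_compl.2 hi⟩
        refine Fintype.mem_piFinset.2 fun i => ?_
        split_ifs with hi
        · exact hS Φ Φ₀ hagree ▸ hΦ.1 i hi
        · exact mem_singleton.2 (hagree i hi)
    _ ≤ s ^ #I := by
        rw [Fintype.card_piFinset]
        simp only [apply_ite card, card_singleton, prod_ite_mem, univ_inter, prod_const]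
        exact Nat.pow_le_pow_left (hs Φ₀) _

theorem card_filter_forall_mem_div_le [Nonempty α] (I : Finset ι) (S : (ι → α) → Finset α)
    {s : ℕ} (hS : ∀ Φ Ψ : ι → α, (∀ i ∉ I, Φ i = Ψ i) → S Φ = S Ψ) (hs : ∀ Φ, #(S Φ) ≤ s) :
    (#{Φ : ι → α | ∀ i ∈ I, Φ i ∈ S Φ} : ℝ) / Fintype.card (ι → α)
      ≤ ((s : ℝ) / Fintype.card α) ^ #I := by
  have hα : (0 : ℝ) < Fintype.card α := by exact_mod_cast Fintype.card_pos
  rw [Fintype.card_fun, div_le_iff₀ (by positivity), Nat.cast_pow,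
    ← Nat.sub_add_cancel (card_le_univ I), pow_add]
  calc (#{Φ : ι → α | ∀ i ∈ I, Φ i ∈ S Φ} : ℝ)
      ≤ (s ^ #I * Fintype.card α ^ (Fintype.card ι - #I) : ℕ) := by
        exact_mod_cast card_filter_forall_mem_le I S hS hs
    _ = _ := by
        push_cast
        rw [div_pow]
        field_simp

end Counting

section Formulas

variable {n m k : ℕ}

lemma card_varsOf_le (Φ : KFormula n m k) (Z : Finset (Fin m)) : #(varsOf Φ Z) ≤ k * #Z :=
  card_biUnion_le.trans <| by
    simpa [mul_comm] using
      sum_le_card_nsmul Z (fun i => #(clauseVars Φ i)) k fun i _ => card_image_le.trans (by simp)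

lemma varsOf_congr {Φ Ψ : KFormula n m k} {Z : Finset (Fin m)} (h : ∀ i ∈ Z, Φ i = Ψ i) :
    varsOf Φ Z = varsOf Ψ Z :=
  biUnion_congr rfl fun i hi => by simp [clauseVars, h i hi]

lemma clauseVars_subset_iff {Φ : KFormula n m k} {i : Fin m} {V : Finset (Fin n)} :
    clauseVars Φ i ⊆ V ↔ Φ i ∈ Fintype.piFinset fun _ => V ×ˢ (univ : Finset Bool) := by
  simp [clauseVars, image_subset_iff]

lemma probOf_eq_card_div (P : KFormula n m k → Prop) [DecidablePred P] :
    probOf n m k P = (#{Φ | P Φ} : ℝ) / Fintype.card (KFormula n m k) := by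
  unfold probOf
  congr

lemma probOf_forall_clauseVars_subset_le (hn : 0 < n) {Z I : Finset (Fin m)}
    (Y : Finset (Fin n)) (hIZ : Disjoint I Z) :
    probOf n m k (fun Φ => ∀ i ∈ I, clauseVars Φ i ⊆ varsOf Φ Z ∪ Y)
      ≤ (((k * #Z + #Y : ℕ) : ℝ) / n) ^ (k * #I) := by
  have : Nonempty (Fin n) := ⟨⟨0, hn⟩⟩
  have hS : ∀ Φ Ψ : KFormula n m k, (∀ i ∉ I, Φ i = Ψ i) →
      (Fintype.piFinset fun _ : Fin k => (varsOf Φ Z ∪ Y) ×ˢ (univ : Finset Bool))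
        = Fintype.piFinset fun _ : Fin k => (varsOf Ψ Z ∪ Y) ×ˢ univ := fun Φ Ψ h => by
    rw [varsOf_congr fun i hi => h i (disjoint_right.1 hIZ hi)]
  have hs : ∀ Φ : KFormula n m k,
      #(Fintype.piFinset fun _ : Fin k => (varsOf Φ Z ∪ Y) ×ˢ (univ : Finset Bool))
        ≤ ((k * #Z + #Y) * 2) ^ k := fun Φ => by
    simp only [Fintype.card_piFinset, card_product, card_univ, Fintype.card_bool, prod_const,
      Fintype.card_fin]
    gcongr
    exact (card_union_le _ _).trans (Nat.add_le_add_right (card_varsOf_le Φ Z) _)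
  calc _ = (#{Φ : KFormula n m k | ∀ i ∈ I,
          Φ i ∈ Fintype.piFinset fun _ => (varsOf Φ Z ∪ Y) ×ˢ (univ : Finset Bool)} : ℝ)
          / Fintype.card (KFormula n m k) := by
        simp only [← clauseVars_subset_iff]
        exact probOf_eq_card_div _
    _ ≤ ((((k * #Z + #Y) * 2) ^ k : ℕ) / (Fintype.card (Fin k → Fin n × Bool) : ℝ)) ^ #I := by
        convert card_filter_forall_mem_div_le I _ hS hs
    _ = _ := by
        simp only [Fintype.card_fun, Fintype.card_prod, Fintype.card_fin, Fintype.card_bool]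
        push_cast
        rw [pow_mul, ← div_pow, mul_div_mul_right _ _ two_ne_zero]

lemma probOf_mono {P Q : KFormula n m k → Prop} (h : ∀ Φ, P Φ → Q Φ) :
    probOf n m k P ≤ probOf n m k Q := by
  simp only [probOf_eq_card_div]
  gcongr
  exact h _

lemma probOf_exists_le {β : Type*} (T : Finset β) (P : β → KFormula n m k → Prop) :
    probOf n m k (fun Φ => ∃ p ∈ T, P p Φ) ≤ ∑ p ∈ T, probOf n m k (P p) := by
  have hsub : (univ.filter fun Φ => ∃ p ∈ T, P p Φ) ⊆ T.biUnion fun p => univ.filter (P p) :=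
    fun Φ hΦ => by simpa using hΦ
  simp only [probOf_eq_card_div, ← sum_div]
  gcongr
  exact_mod_cast (card_le_card hsub).trans card_biUnion_le

lemma probOf_exists_core_le (hn : 0 < n) (a b : ℕ) :
    probOf n m k (fun Φ =>
        ∃ (Z I : Finset (Fin m)) (Y : Finset (Fin n)),
          #Z = a ∧ #Y = b ∧ #I = a ∧ Disjoint I Z ∧
          ∀ i ∈ I, clauseVars Φ i ⊆ varsOf Φ Z ∪ Y)
      ≤ m.choose a * n.choose b * m.choose a * (((k * a + b : ℕ) : ℝ) / n) ^ (k * a) := by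
  set T := (powersetCard a univ ×ˢ powersetCard b univ ×ˢ powersetCard a univ).filter
    fun p : Finset (Fin m) × Finset (Fin n) × Finset (Fin m) => Disjoint p.2.2 p.1
  have hT : #T ≤ m.choose a * n.choose b * m.choose a := by
    refine (card_filter_le _ _).trans_eq ?_
    simp [mul_assoc]
  calc _ ≤ probOf n m k (fun Φ => ∃ p ∈ T, ∀ i ∈ p.2.2, clauseVars Φ i ⊆ varsOf Φ p.1 ∪ p.2.1) :=
        probOf_mono fun Φ ⟨Z, I, Y, hZ, hY, hI, hIZ, h⟩ => ⟨(Z, Y, I), by simp [T, *], h⟩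
    _ ≤ ∑ p ∈ T, probOf n m k (fun Φ => ∀ i ∈ p.2.2, clauseVars Φ i ⊆ varsOf Φ p.1 ∪ p.2.1) :=
        probOf_exists_le T _
    _ ≤ ∑ _p ∈ T, (((k * a + b : ℕ) : ℝ) / n) ^ (k * a) := sum_le_sum fun p hp => by
        simp only [T, mem_filter, mem_product, mem_powersetCard] at hp
        obtain ⟨⟨⟨-, hZ⟩, ⟨-, hY⟩, ⟨-, hI⟩⟩, hIZ⟩ := hp
        simpa [hZ, hY, hI] using probOf_forall_clauseVars_subset_le hn p.2.1 hIZ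
    _ ≤ _ := by
        rw [sum_const, nsmul_eq_mul]
        gcongr
        exact_mod_cast hT

end Formulas

open Filter Real

theorem Nat.choose_le_exp_one_mul_div_pow (n r : ℕ) :
    (n.choose r : ℝ) ≤ (exp 1 * n / r) ^ r := by
  rcases r.eq_zero_or_pos with rfl | hr
  · simp
  have hr' : (0 : ℝ) < r := by exact_mod_cast hr
  have hfact : (r : ℝ) ^ r / r.factorial ≤ exp 1 ^ r := by
    simpa [← exp_nat_mul] using pow_div_factorial_le_exp _ hr'.le r
  calc (n.choose r : ℝ) ≤ n ^ r / r.factorial := Nat.choose_le_pow_div r n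
    _ = n ^ r / r ^ r * (r ^ r / r.factorial) := by field_simp
    _ ≤ n ^ r / r ^ r * exp 1 ^ r := by gcongr
    _ = (exp 1 * n / r) ^ r := by rw [div_pow, mul_pow]; ring

lemma eventually_two_add_four_mul_log_le :
    ∀ᶠ k : ℕ in atTop, 2 + 4 * log k ≤ (1 - log 2) * k := by
  have hlog : ∀ᶠ x : ℝ in atTop, ‖log x‖ ≤ 1 / 40 * ‖x‖ :=
    isLittleO_log_id_atTop.bound (by norm_num)
  filter_upwards [tendsto_natCast_atTop_atTop.eventually (hlog.and (eventually_ge_atTop 20))]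
    with k ⟨hk, hk20⟩
  rw [norm_eq_abs, norm_eq_abs, abs_of_nonneg (by linarith : (0 : ℝ) ≤ k)] at hk
  nlinarith [le_abs_self (log k), log_two_lt_d9]

lemma union_bound_base_le {k : ℕ} {ε lam : ℝ} (hk : 2 + 4 * log k ≤ (1 - log 2) * k)
    (h4 : 4 < lam) (hlk : lam < k) (hε : 0 < ε) (hεk : ε ≤ ((k : ℝ) ^ 3)⁻¹) :
    (exp 1 * 2 ^ k / ε) ^ 2 * (exp 1 / (ε * (k - lam))) ^ ((k : ℝ) - lam) * (2 * k * ε) ^ k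
      ≤ (2 * exp 1) ^ (2 * k) * ε ^ (lam / 2) := by
  have hk0 : (0 : ℝ) < k := by linarith
  have hμ : (0 : ℝ) < k - lam := by linarith
  have hA : log ((exp 1 * 2 ^ k / ε) ^ 2) = 2 * (1 + k * log 2 - log ε) := by
    rw [log_pow, log_div (by positivity) hε.ne', log_mul (exp_pos 1).ne' (by positivity), log_exp,
      log_pow]
    push_cast
    ring
  have hB : log ((exp 1 / (ε * (k - lam))) ^ ((k : ℝ) - lam))
      = (k - lam) * (1 - log ε - log (k - lam)) := by
    rw [log_rpow (by positivity), log_div (exp_pos 1).ne' (by positivity), log_mul hε.ne' hμ.ne',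
      log_exp]
    ring
  have hC : log ((2 * k * ε) ^ k) = k * (log 2 + log k + log ε) := by
    rw [log_pow, log_mul (by positivity) hε.ne', log_mul two_ne_zero hk0.ne']
  have hR : log ((2 * exp 1) ^ (2 * k) * ε ^ (lam / 2))
      = 2 * k * (log 2 + 1) + lam / 2 * log ε := by
    rw [log_mul (by positivity) (by positivity), log_pow, log_rpow hε,
      log_mul two_ne_zero (exp_pos 1).ne', log_exp]
    push_cast
    ring
  rw [← log_le_log_iff (by positivity) (by positivity), log_mul (by positivity) (by positivity),
    log_mul (by positivity) (by positivity), hA, hB, hC, hR]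
  have hentropy : (k - lam) - k ≤ (k - lam) * (log (k - lam) - log k) := by
    have h := one_sub_inv_le_log_of_pos (div_pos hμ hk0)
    rw [inv_div, log_div hμ.ne' hk0.ne'] at h
    calc (k - lam) - k = (k - lam) * (1 - k / (k - lam)) := by field_simp
      _ ≤ _ := by gcongr
  have hlogε : log ε ≤ -3 * log k := by
    have h := log_le_log hε hεk
    rwa [log_inv, log_pow, Nat.cast_ofNat, neg_mul_eq_neg_mul] at h
  have hlogk : 0 ≤ log k := log_nonneg (by linarith)
  linarith [mul_le_mul_of_nonneg_left hlogε (by linarith : (0 : ℝ) ≤ lam / 2 - 2),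
    mul_nonneg (by linarith : (0 : ℝ) ≤ lam / 2 - 2) hlogk]

lemma choose_mul_choose_mul_choose_mul_pow_le {n m k a b : ℕ} {ε lam : ℝ}
    (hk : 2 + 4 * log k ≤ (1 - log 2) * k) (h4 : 4 < lam) (hlk : lam < k) (hε : 0 < ε)
    (hεk : ε ≤ ((k : ℝ) ^ 3)⁻¹) (hm : (m : ℝ) / n ≤ 2 ^ k * log 2) (ha : 0 < a)
    (haε : (a : ℝ) = ε * n) (hbε : (b : ℝ) = ε * ((k : ℝ) - lam) * n) :
    (m.choose a : ℝ) * n.choose b * m.choose a * (((k * a + b : ℕ) : ℝ) / n) ^ (k * a)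
      ≤ ((2 * exp 1) ^ (2 * k) * ε ^ (lam / 2)) ^ a := by
  have hn : (0 : ℝ) < n :=
    pos_of_mul_pos_right (haε ▸ (by exact_mod_cast ha : (0 : ℝ) < a)) hε.le
  have hμ : (0 : ℝ) < k - lam := by linarith
  have hZ : (m.choose a : ℝ) ≤ (exp 1 * 2 ^ k / ε) ^ a := by
    refine (Nat.choose_le_exp_one_mul_div_pow m a).trans (pow_le_pow_left₀ (by positivity) ?_ a)
    have hm' : (m : ℝ) / n ≤ 2 ^ k := hm.trans (mul_le_of_le_one_right (by positivity)
      (log_two_lt_d9.le.trans (by norm_num)))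
    calc exp 1 * m / a = exp 1 * (m / n) / ε := by rw [haε]; field_simp
      _ ≤ exp 1 * 2 ^ k / ε := by gcongr
  have hY : (n.choose b : ℝ) ≤ ((exp 1 / (ε * (k - lam))) ^ ((k : ℝ) - lam)) ^ a := by
    have hbase : exp 1 * n / b = exp 1 / (ε * (k - lam)) := by rw [hbε]; field_simp
    have hb : (b : ℝ) = ((k : ℝ) - lam) * a := by rw [haε, hbε]; ring
    refine (Nat.choose_le_exp_one_mul_div_pow n b).trans_eq ?_
    rw [hbase, ← rpow_natCast, hb, rpow_mul (by positivity), rpow_natCast]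
  have hI : (((k * a + b : ℕ) : ℝ) / n) ^ (k * a) ≤ ((2 * k * ε) ^ k) ^ a := by
    rw [← pow_mul]
    gcongr
    rw [div_le_iff₀ hn]
    push_cast
    rw [haε, hbε]
    nlinarith [mul_pos hε hn]
  calc _ ≤ (exp 1 * 2 ^ k / ε) ^ a * ((exp 1 / (ε * (k - lam))) ^ ((k : ℝ) - lam)) ^ a
          * (exp 1 * 2 ^ k / ε) ^ a * ((2 * k * ε) ^ k) ^ a := by gcongr
    _ = ((exp 1 * 2 ^ k / ε) ^ 2 * (exp 1 / (ε * (k - lam))) ^ ((k : ℝ) - lam)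
          * (2 * k * ε) ^ k) ^ a := by ring
    _ ≤ _ := pow_le_pow_left₀ (by positivity) (union_bound_base_le hk h4 hlk hε hεk) a

/-- **Union bound (2.5) in Lemma 2.4.** There is `k₀ > 0` such that for all `k ≥ k₀`,
reals `ε > 0`, `4 < λ ≤ k` with `ε ≤ k⁻³`, and `n, m` with `m/n ≤ 2^k ln 2` such that
`εn` and `ε(k−λ)n` are positive integers, the probability that there exist `Z ⊆ [m]` with
`|Z| = εn`, `Y ⊆ V` with `|Y| = ε(k−λ)n`, and `I ⊆ [m] ∖ Z` with `|I| = εn` such that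
`N(Φ_i) ⊆ N(Φ_Z) ∪ Y` for all `i ∈ I`, is at most `((2e)^{2k} ε^{λ/2})^{εn}`. -/
theorem prob_exists_core_structure :
    ∃ k0 : ℕ, 0 < k0 ∧ ∀ k : ℕ, k0 ≤ k →
      ∀ ε lam : ℝ, 0 < ε → 4 < lam → lam ≤ k → ε ≤ ((k : ℝ) ^ 3)⁻¹ →
        ∀ n m a b : ℕ, (m : ℝ) / n ≤ 2 ^ k * Real.log 2 →
          0 < a → 0 < b → (a : ℝ) = ε * n → (b : ℝ) = ε * ((k : ℝ) - lam) * n →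
          probOf n m k (fun Φ =>
              ∃ (Z I : Finset (Fin m)) (Y : Finset (Fin n)),
                Z.card = a ∧ Y.card = b ∧ I.card = a ∧ Disjoint I Z ∧
                ∀ i ∈ I, clauseVars Φ i ⊆ varsOf Φ Z ∪ Y)
            ≤ ((2 * Real.exp 1) ^ (2 * k) * ε ^ (lam / 2)) ^ a := by
  obtain ⟨k0, hk0⟩ := eventually_atTop.1 eventually_two_add_four_mul_log_le
  refine ⟨k0 + 1, k0.succ_pos, fun k hk ε lam hε h4 _ hεk n m a b hm ha hb haε hbε => ?_⟩
  have hn : 0 < n := Nat.pos_of_ne_zero fun hn => by simp [hn] at haε; omega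
  have hlk : lam < k := by
    have h : (0 : ℝ) < ε * (k - lam) * n := hbε ▸ (by exact_mod_cast hb)
    linarith [pos_of_mul_pos_right (pos_of_mul_pos_left h (by positivity)) hε.le]
  exact (probOf_exists_core_le hn a b).trans
    (choose_mul_choose_mul_choose_mul_pow_le (hk0 k (by omega)) h4 hlk hε hεk hm ha haε hbε)
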